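/- Let γ ∈ (0,1). Suppose f ∈ C([0,1]) ∩ C¹([0,1)) satisfies 0 ≤ f(y) ≤ 1 for all y ∈ [0,1], f(0) = γ, f(1) = 1, and f'(y) = ((1+γ)/y)·(γ − f(y)) + γ·f(y)·(1−f(y))/(1−y) for all y ∈ (0,1). Then: (i) lim_{y↑1} f'(y) = ∞, and in particular f does not extend to a function in C¹([0,1]); (ii) ∫₀¹ |f'(q)| dq < ∞; (iii) ∫₀¹ (1−f(q))/(1−q) dq < ∞; and (iv) lim inf_{y↑1} (1−f(y))/(1−y) = ∞. -/

import Mathlib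

/-!
Near `y = 1` we have `f ≥ (1 + γ)/2`, and the equation then yields, for
`g y = (1 - f y)/(1 - y)`, the two-sided bound `γ/2 · g - C ≤ f' ≤ g - δ` with
`δ = (1 + γ)(1 - γ)/2 > 0`. The upper bound reads `g' = (g - f')/(1 - y) ≥ δ/(1 - y)`, so
`g + δ log (1 - y)` is increasing and `g → ∞`; the lower bound then forces `f' → ∞`.
Being bounded below near `1`, `f'` is integrable there (`f + C y` has a nonnegative derivative
and is continuous up to `1`), and so is `g ≤ 2 (f' + C)/γ`.
-/

open Set Real Filter Topology MeasureTheory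

theorem tendsto_log_sub_nhdsLT (b : ℝ) : Tendsto (fun y => log (b - y)) (𝓝[<] b) atBot := by
  refine tendsto_log_nhdsGT_zero.comp (tendsto_nhdsWithin_iff.2 ⟨?_, ?_⟩)
  · have h : Tendsto (fun y => b - y) (𝓝 b) (𝓝 (b - b)) := tendsto_const_nhds.sub tendsto_id
    exact (sub_self b ▸ h).mono_left nhdsWithin_le_nhds
  · filter_upwards [self_mem_nhdsWithin] with y (hy : y < b) using sub_pos.2 hy

theorem tendsto_atTop_of_hasDerivAt_ge_div {g g' : ℝ → ℝ} {a b δ : ℝ} (hab : a < b)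
    (hδ : 0 < δ) (hderiv : ∀ y ∈ Ioo a b, HasDerivAt g (g' y) y)
    (hge : ∀ y ∈ Ioo a b, δ / (b - y) ≤ g' y) :
    Tendsto g (𝓝[<] b) atTop := by
  set φ := fun y => g y + δ * log (b - y)
  have hφ : ∀ y ∈ Ioo a b, HasDerivAt φ (g' y - δ / (b - y)) y := fun y hy => by
    have hlog := ((hasDerivAt_id' y).const_sub b).log (sub_pos.2 hy.2).ne'
    exact ((hderiv y hy).add (hlog.const_mul δ)).congr_deriv (by ring)
  have hmono : MonotoneOn φ (Ioo a b) := by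
    refine monotoneOn_of_hasDerivWithinAt_nonneg (f' := fun y => g' y - δ / (b - y))
      (convex_Ioo a b)
      (fun y hy => (hφ y hy).continuousAt.continuousWithinAt) ?_ ?_ <;> rw [interior_Ioo]
    · exact fun y hy => (hφ y hy).hasDerivWithinAt
    · exact fun y hy => sub_nonneg.2 (hge y hy)
  obtain ⟨c, hac, hcb⟩ := exists_between hab
  have hlower : Tendsto (fun y => φ c - δ * log (b - y)) (𝓝[<] b) atTop :=
    tendsto_atTop_add_const_left _ _
      (tendsto_neg_atBot_atTop.comp ((tendsto_log_sub_nhdsLT b).const_mul_atBot hδ))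
  refine tendsto_atTop_mono' _ ?_ hlower
  filter_upwards [Ioo_mem_nhdsLT hcb] with y hy
  have := hmono ⟨hac, hcb⟩ ⟨hac.trans hy.1, hy.2⟩ hy.1.le
  simp only [φ] at this ⊢
  linarith

theorem tendsto_div_sub_atTop_of_deriv_le {f f' : ℝ → ℝ} {a b c δ : ℝ} (hab : a < b)
    (hδ : 0 < δ) (hderiv : ∀ y ∈ Ioo a b, HasDerivAt f (f' y) y)
    (hle : ∀ y ∈ Ioo a b, f' y ≤ (c - f y) / (b - y) - δ) :
    Tendsto (fun y => (c - f y) / (b - y)) (𝓝[<] b) atTop := by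
  refine tendsto_atTop_of_hasDerivAt_ge_div hab hδ
    (g' := fun y => ((c - f y) / (b - y) - f' y) / (b - y)) (fun y hy => ?_) (fun y hy => ?_)
  · have hne : b - y ≠ 0 := (sub_pos.2 hy.2).ne'
    exact (((hderiv y hy).const_sub c).div ((hasDerivAt_id' y).const_sub b) hne).congr_deriv
      (by field_simp; ring)
  · exact div_le_div_of_nonneg_right (by linarith [hle y hy]) (sub_pos.2 hy.2).le

theorem integrableOn_deriv_of_ge {f f' : ℝ → ℝ} {a b C : ℝ} (hf : ContinuousOn f (Icc a b))
    (hderiv : ∀ x ∈ Ioo a b, HasDerivAt f (f' x) x) (hge : ∀ x ∈ Ioo a b, C ≤ f' x) :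
    IntegrableOn f' (Ioc a b) := by
  have h := intervalIntegral.integrableOn_deriv_of_nonneg (g := fun x => f x - C * x)
    (hf.sub (continuousOn_const.mul continuousOn_id))
    (fun x hx => (hderiv x hx).sub ((hasDerivAt_id x).const_mul C))
    (fun x hx => sub_nonneg.2 (by simpa using hge x hx))
  simpa [Pi.add_def] using h.add (integrableOn_const (C := C) measure_Ioc_lt_top.ne)

theorem integrableOn_Ioc_div_sub_of_le_deriv {f f' : ℝ → ℝ} {a b c κ C : ℝ} (hκ : 0 < κ)
    (hf : ContinuousOn f (Ioo a b)) (hf' : IntegrableOn f' (Ioc a b))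
    (hfc : ∀ y ∈ Ioo a b, f y ≤ c)
    (hge : ∀ y ∈ Ioo a b, κ * ((c - f y) / (b - y)) - C ≤ f' y) :
    IntegrableOn (fun y => (c - f y) / (b - y)) (Ioc a b) := by
  have hdom : IntegrableOn (fun y => (f' y + C) / κ) (Ioc a b) :=
    (hf'.add (integrableOn_const measure_Ioc_lt_top.ne)).div_const κ
  have hcont : ContinuousOn (fun y => (c - f y) / (b - y)) (Ioo a b) :=
    (continuousOn_const.sub hf).div (continuousOn_const.sub continuousOn_id)
      fun y hy => (sub_pos.2 hy.2).ne'
  rw [integrableOn_Ioc_iff_integrableOn_Ioo]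
  refine (hdom.mono_set Ioo_subset_Ioc_self).mono' (hcont.aestronglyMeasurable measurableSet_Ioo) ?_
  filter_upwards [ae_restrict_mem measurableSet_Ioo] with y hy
  rw [norm_of_nonneg (div_nonneg (sub_nonneg.2 (hfc y hy)) (sub_pos.2 hy.2).le),
    le_div_iff₀ hκ]
  linarith [hge y hy]

theorem tendsto_atTop_of_eventually_mul_sub_le {α : Type*} {l : Filter α} {g h : α → ℝ}
    {κ C : ℝ} (hκ : 0 < κ) (hg : Tendsto g l atTop)
    (hle : ∀ᶠ x in l, κ * g x - C ≤ h x) :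
    Tendsto h l atTop := by
  refine tendsto_atTop_mono' l hle ?_
  simpa only [sub_eq_add_neg] using tendsto_atTop_add_const_right l (-C) (hg.const_mul_atTop hκ)

theorem exists_forall_Ioo_lt_of_continuousWithinAt {f : ℝ → ℝ} {s : Set ℝ} {l' b θ : ℝ}
    (hl' : l' < b) (hs : s ∈ 𝓝[<] b) (hf : ContinuousWithinAt f s b) (hθ : θ < f b) :
    ∃ l ∈ Ico l' b, ∀ y ∈ Ioo l b, θ < f y :=
  (mem_nhdsLT_iff_exists_mem_Ico_Ioo_subset hl').1
    ((hf.tendsto.mono_left (nhdsWithin_le_of_mem hs)).eventually (lt_mem_nhds hθ))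

theorem intervalIntegrable_of_continuousOn_of_integrableOn_Ioc {φ : ℝ → ℝ} {a c b : ℝ}
    (hac : a ≤ c) (hcb : c ≤ b) (hcont : ContinuousOn φ (Icc a c))
    (hint : IntegrableOn φ (Ioc c b)) : IntervalIntegrable φ volume a b :=
  (hcont.intervalIntegrable_of_Icc hac).trans
    ((intervalIntegrable_iff_integrableOn_Ioc_of_le hcb).2 hint)

theorem not_exists_continuousOn_Icc_eqOn_of_tendsto_atTop {φ : ℝ → ℝ} {a b : ℝ}
    (hab : a < b) (h : Tendsto φ (𝓝[<] b) atTop) :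
    ¬ ∃ F : ℝ → ℝ, ContinuousOn F (Icc a b) ∧ ∀ y ∈ Ico a b, F y = φ y := by
  rintro ⟨F, hF, hFφ⟩
  have hlim : Tendsto F (𝓝[<] b) (𝓝 (F b)) :=
    (hF b (right_mem_Icc.2 hab.le)).tendsto.mono_left (nhdsWithin_le_of_mem (Icc_mem_nhdsLT hab))
  refine not_tendsto_nhds_of_tendsto_atTop h (F b) (hlim.congr' ?_)
  filter_upwards [Ioo_mem_nhdsLT hab] with y hy using hFφ y (Ioo_subset_Ico_self hy)

section Riccati

variable {γ y v : ℝ}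

theorem riccati_rhs_le (hγ : γ ∈ Ioo (0 : ℝ) 1) (hy : y ∈ Ioo (0 : ℝ) 1)
    (hv : (1 + γ) / 2 ≤ v) (hv1 : v ≤ 1) :
    (1 + γ) / y * (γ - v) + γ * v * (1 - v) / (1 - y) ≤
      (1 - v) / (1 - y) - (1 + γ) * (1 - γ) / 2 := by
  obtain ⟨hγ0, hγ1⟩ := hγ
  have hinv : 1 + γ ≤ (1 + γ) / y := by rw [le_div_iff₀ hy.1]; nlinarith [hy.2]
  have hquot : 0 ≤ (1 - v) / (1 - y) := div_nonneg (by linarith) (by linarith [hy.2])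
  have hlin : (1 + γ) / y * (γ - v) ≤ -((1 + γ) * (1 - γ) / 2) := by
    nlinarith [mul_le_mul_of_nonpos_right hinv (by linarith : γ - v ≤ 0)]
  have hquad : γ * v * (1 - v) / (1 - y) ≤ (1 - v) / (1 - y) := by
    rw [mul_div_assoc]
    exact mul_le_of_le_one_left hquot (by nlinarith)
  linarith

theorem le_riccati_rhs {a : ℝ} (hγ : 0 < γ) (ha : 0 < a) (hay : a ≤ y) (hy1 : y < 1)
    (hv : 1 / 2 ≤ v) (hv1 : v ≤ 1) :
    γ / 2 * ((1 - v) / (1 - y)) - (1 + γ) / a ≤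
      (1 + γ) / y * (γ - v) + γ * v * (1 - v) / (1 - y) := by
  have hquot : 0 ≤ (1 - v) / (1 - y) := div_nonneg (by linarith) (by linarith)
  have hlin : -((1 + γ) / a) ≤ (1 + γ) / y * (γ - v) := by
    have : (1 + γ) / y ≤ (1 + γ) / a := by gcongr
    nlinarith [div_pos (by linarith : 0 < 1 + γ) (ha.trans_le hay)]
  have hquad : γ / 2 * ((1 - v) / (1 - y)) ≤ γ * v * (1 - v) / (1 - y) := by
    rw [mul_div_assoc]
    exact mul_le_mul_of_nonneg_right (by nlinarith) hquot
  linarith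

end Riccati

theorem stmt18_general (γ : ℝ) (hγ : γ ∈ Ioo (0:ℝ) 1)
    (f f' : ℝ → ℝ)
    (hc : ContinuousOn f (Icc (0:ℝ) 1))
    (hc' : ContinuousOn f' (Ico (0:ℝ) 1))
    (hd : ∀ y ∈ Ico (0:ℝ) 1, HasDerivWithinAt f (f' y) (Ico (0:ℝ) 1) y)
    (hbd : ∀ y ∈ Icc (0:ℝ) 1, 0 ≤ f y ∧ f y ≤ 1)
    (hf1 : f 1 = 1)
    (hode : ∀ y ∈ Ioo (0:ℝ) 1,
      f' y = (1 + γ) / y * (γ - f y) + γ * f y * (1 - f y) / (1 - y)) :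
    Tendsto f' (𝓝[<] (1:ℝ)) atTop ∧
    ¬ (∃ F : ℝ → ℝ, ContinuousOn F (Icc (0:ℝ) 1) ∧ ∀ y ∈ Ico (0:ℝ) 1, F y = f' y) ∧
    IntervalIntegrable f' MeasureTheory.volume 0 1 ∧
    IntervalIntegrable (fun q => (1 - f q) / (1 - q)) MeasureTheory.volume 0 1 ∧
    Tendsto (fun y => (1 - f y) / (1 - y)) (𝓝[<] (1:ℝ)) atTop := by
  set g := fun y => (1 - f y) / (1 - y)
  obtain ⟨a, ⟨ha0, ha1⟩, hfa⟩ := exists_forall_Ioo_lt_of_continuousWithinAt one_half_lt_one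
    (Icc_mem_nhdsLT zero_lt_one) (hc 1 (right_mem_Icc.2 zero_le_one))
    (show (1 + γ) / 2 < f 1 by rw [hf1]; linarith [hγ.2])
  have hIoo : ∀ y ∈ Ioo a 1, y ∈ Ioo (0:ℝ) 1 := fun y hy => ⟨by linarith [hy.1], hy.2⟩
  have hder : ∀ y ∈ Ioo a 1, HasDerivAt f (f' y) y := fun y hy =>
    (hd y (Ioo_subset_Ico_self (hIoo y hy))).hasDerivAt (Ico_mem_nhds (hIoo y hy).1 hy.2)
  have hf_le : ∀ y ∈ Ioo a 1, f y ≤ 1 := fun y hy =>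
    (hbd y (Ioo_subset_Icc_self (hIoo y hy))).2
  have hupper : ∀ y ∈ Ioo a 1, f' y ≤ g y - (1 + γ) * (1 - γ) / 2 := fun y hy =>
    (hode y (hIoo y hy)).trans_le
      (riccati_rhs_le hγ (hIoo y hy) (hfa y hy).le (hf_le y hy))
  set C := (1 + γ) / a
  have hlower : ∀ y ∈ Ioo a 1, γ / 2 * g y - C ≤ f' y := fun y hy =>
    (le_riccati_rhs hγ.1 (by linarith) hy.1.le hy.2 (by linarith [hfa y hy, hγ.1])
      (hf_le y hy)).trans_eq (hode y (hIoo y hy)).symm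
  have hg_top : Tendsto g (𝓝[<] 1) atTop :=
    tendsto_div_sub_atTop_of_deriv_le ha1 (by nlinarith [hγ.1, hγ.2]) hder hupper
  have hf'_top : Tendsto f' (𝓝[<] 1) atTop :=
    tendsto_atTop_of_eventually_mul_sub_le (half_pos hγ.1) hg_top
      (eventually_of_mem (Ioo_mem_nhdsLT ha1) hlower)
  have hf'_int : IntegrableOn f' (Ioc a 1) :=
    integrableOn_deriv_of_ge (C := -C) (hc.mono (Icc_subset_Icc (by linarith) le_rfl)) hder
      fun y hy => by
        nlinarith [hlower y hy, hγ.1,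
          div_nonneg (sub_nonneg.2 (hf_le y hy)) (sub_nonneg.2 hy.2.le)]
  have hg_int : IntegrableOn g (Ioc a 1) :=
    integrableOn_Ioc_div_sub_of_le_deriv (half_pos hγ.1)
      (hc.mono fun y hy => Ioo_subset_Icc_self (hIoo y hy)) hf'_int hf_le hlower
  have hg_cont : ContinuousOn g (Icc 0 a) :=
    (continuousOn_const.sub (hc.mono (Icc_subset_Icc le_rfl ha1.le))).div
      (continuousOn_const.sub continuousOn_id) fun y hy => by linarith [hy.2]
  exact ⟨hf'_top, not_exists_continuousOn_Icc_eqOn_of_tendsto_atTop zero_lt_one hf'_top,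
    intervalIntegrable_of_continuousOn_of_integrableOn_Ioc (by linarith) ha1.le
      (hc'.mono (Icc_subset_Ico_right ha1)) hf'_int,
    intervalIntegrable_of_continuousOn_of_integrableOn_Ioc (by linarith) ha1.le hg_cont hg_int,
    hg_top⟩

/-- Let `γ ∈ (0,1)` and let `f ∈ C([0,1]) ∩ C¹([0,1))` with
`0 ≤ f ≤ 1`, `f 0 = γ`, `f 1 = 1`, solve
`f'(y) = (1+γ)/y·(γ − f(y)) + γ·f(y)(1−f(y))/(1−y)` on `(0,1)`. Then
(i) `f'(y) → ∞` as `y ↑ 1` (in particular `f'` does not extend continuously to `[0,1]`);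
(ii) `∫₀¹ |f'| < ∞`; (iii) `∫₀¹ (1−f(q))/(1−q) dq < ∞`; and
(iv) `(1−f(y))/(1−y) → ∞` as `y ↑ 1`. -/
theorem stmt18 (γ : ℝ) (hγ : γ ∈ Ioo (0:ℝ) 1)
    (f f' : ℝ → ℝ)
    (hc : ContinuousOn f (Icc (0:ℝ) 1))
    (hc' : ContinuousOn f' (Ico (0:ℝ) 1))
    (hd : ∀ y ∈ Ico (0:ℝ) 1, HasDerivWithinAt f (f' y) (Ico (0:ℝ) 1) y)
    (hbd : ∀ y ∈ Icc (0:ℝ) 1, 0 ≤ f y ∧ f y ≤ 1)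
    (hf0 : f 0 = γ) (hf1 : f 1 = 1)
    (hode : ∀ y ∈ Ioo (0:ℝ) 1,
      f' y = (1 + γ) / y * (γ - f y) + γ * f y * (1 - f y) / (1 - y)) :
    Tendsto f' (𝓝[<] (1:ℝ)) atTop ∧
    ¬ (∃ F : ℝ → ℝ, ContinuousOn F (Icc (0:ℝ) 1) ∧ ∀ y ∈ Ico (0:ℝ) 1, F y = f' y) ∧
    IntervalIntegrable f' MeasureTheory.volume 0 1 ∧
    IntervalIntegrable (fun q => (1 - f q) / (1 - q)) MeasureTheory.volume 0 1 ∧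
    Tendsto (fun y => (1 - f y) / (1 - y)) (𝓝[<] (1:ℝ)) atTop :=
  stmt18_general γ hγ f f' hc hc' hd hbd hf1 hode
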